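/- arXiv:2605.06329 — 2 statements merged into one kernel-verified Lean document; each statement's English description precedes it below -/
import Mathlib

section
/- Define for h > 0 and θ ∈ [−π, π] \ {0} the symbols k_h(θ) = (4/h) sin²(θ/2) and s_h(θ) = h/α(θ) with α(θ) = arcosh(2 − cos θ). Then there exist absolute constants 0 < c ≤ C such that c·h ≤ s_h(θ)² k_h(θ) ≤ C·h for all θ ∈ [−π, π] \ {0} and all h > 0. In particular the ratio of the maximum to the minimum of θ ↦ s_h(θ)² k_h(θ) over nonzero θ is bounded independently of h. -/
open Real Set

/-- Single-layer flat-symbol conditioning: with the surface stiffness symbol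
`k_h(θ) = (4/h) sin²(θ/2)` and the single-layer symbol `s_h(θ) = h/α(θ)`,
`cosh α(θ) = 2 − cos θ`, the product `s_h(θ)² k_h(θ)` is comparable to `h`
uniformly in `θ ≠ 0` and `h > 0`; in particular its max/min ratio is bounded
independently of `h`. -/
theorem single_layer_symbol_conditioning :
    ∃ c C : ℝ, 0 < c ∧ c ≤ C ∧
      ∀ h : ℝ, 0 < h → ∀ θ ∈ Icc (-π) π, θ ≠ 0 →
        ∀ α : ℝ, 0 ≤ α → Real.cosh α = 2 - Real.cos θ →
          c * h ≤ (h / α) ^ 2 * ((4 / h) * Real.sin (θ / 2) ^ 2) ∧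
          (h / α) ^ 2 * ((4 / h) * Real.sin (θ / 2) ^ 2) ≤ C * h := by
  refine ⟨1, 9, one_pos, by norm_num, ?_⟩
  intro h hh θ hθ hθ0 α hα hcosh
  -- sin(θ/2) ≠ 0
  have hpi := Real.pi_pos
  have hθ2 : θ / 2 ∈ Ioo (-π) π := by
    constructor <;> [nlinarith [hθ.1]; nlinarith [hθ.2]]
  have hsin_ne : Real.sin (θ / 2) ≠ 0 := by
    intro hs
    have := (Real.sin_eq_zero_iff_of_lt_of_lt hθ2.1 hθ2.2).mp hs
    exact hθ0 (by linarith)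
  -- key identity: sin(θ/2)^2 = sinh(α/2)^2
  have hcos2 : Real.cos θ = 1 - 2 * Real.sin (θ / 2) ^ 2 := by
    have h1 : Real.cos (2 * (θ / 2)) = 2 * Real.cos (θ/2) ^ 2 - 1 := Real.cos_two_mul _
    have h2 := Real.sin_sq_add_cos_sq (θ / 2)
    have h3 : (2:ℝ) * (θ/2) = θ := by ring
    rw [h3] at h1
    nlinarith
  have hcosh2 : Real.cosh α = 1 + 2 * Real.sinh (α / 2) ^ 2 := by
    have h1 : Real.cosh (2 * (α / 2)) = Real.cosh (α/2) ^ 2 + Real.sinh (α/2) ^ 2 :=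
      Real.cosh_two_mul _
    have h2 : Real.cosh (α/2) ^ 2 = Real.sinh (α/2) ^ 2 + 1 := Real.cosh_sq _
    have : (2 : ℝ) * (α / 2) = α := by ring
    rw [this] at h1
    linarith
  have key : Real.sin (θ / 2) ^ 2 = Real.sinh (α / 2) ^ 2 := by
    rw [hcosh2, hcos2] at hcosh; linarith
  -- α > 0
  have hα0 : 0 < α := by
    rcases hα.lt_or_eq with h' | h'
    · exact h'
    · exfalso
      have hz : Real.sinh (α / 2) = 0 := by rw [← h']; simp
      rw [hz] at key
      simp at key
      exact hsin_ne key
  -- lower bound: α/2 < sinh(α/2)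
  have hlow : α / 2 < Real.sinh (α / 2) :=
    Real.self_lt_sinh_iff.mpr (by linarith)
  -- upper bound: sinh(α/2) ≤ (α/2) * exp(α/2), and exp(α/2) ≤ 3
  have hexp : ∀ x : ℝ, 0 ≤ x → Real.sinh x ≤ x * Real.exp x := by
    intro x hx
    rw [Real.sinh_eq]
    have h1 : 1 + (-(2*x)) ≤ Real.exp (-(2*x)) := by
      linarith [Real.add_one_le_exp (-(2*x))]
    have h2 : Real.exp (-(2*x)) * Real.exp x = Real.exp (-x) := by
      rw [← Real.exp_add]; ring_nf
    have h3 : 0 < Real.exp x := Real.exp_pos x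
    nlinarith
  have hexpα : Real.exp (α / 2) ≤ 3 := by
    have h1 : Real.exp α ≤ 2 * Real.cosh α := by
      rw [Real.cosh_eq]
      have := Real.exp_pos (-α)
      linarith
    have hc3 : Real.cosh α ≤ 3 := by
      rw [hcosh]
      have := Real.neg_one_le_cos θ
      linarith
    have h2 : Real.exp (α/2) * Real.exp (α/2) = Real.exp α := by
      rw [← Real.exp_add]; ring_nf
    nlinarith [Real.exp_pos (α/2)]
  have hsinh_pos : 0 < Real.sinh (α / 2) := by nlinarith
  have hup : Real.sinh (α / 2) ≤ (α / 2) * 3 := by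
    calc Real.sinh (α / 2) ≤ (α / 2) * Real.exp (α / 2) := hexp _ (by linarith)
    _ ≤ (α / 2) * 3 := by nlinarith
  -- conclude
  have hα2 : (0:ℝ) < α ^ 2 := by positivity
  have hexpr : (h / α) ^ 2 * ((4 / h) * Real.sin (θ / 2) ^ 2)
      = 4 * h * (Real.sinh (α/2) ^ 2 / α ^ 2) := by
    rw [key]; field_simp
  rw [hexpr]
  constructor
  · have h1 : α ^ 2 / 4 ≤ Real.sinh (α/2) ^ 2 := by nlinarith
    have h2 : (1:ℝ) * h = 4 * h * ((α^2/4) / α^2) := by field_simp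
    rw [h2]
    gcongr
  · have h1 : Real.sinh (α/2) ^ 2 ≤ 9/4 * α ^ 2 := by nlinarith
    have h2 : (9:ℝ) * h = 4 * h * ((9/4*α^2) / α^2) := by field_simp
    rw [h2]
    gcongr
end

section
/- Define the double-layer symbol factor d(θ) = 1 − e^{−α(θ)} with α(θ) = arcosh(2 − cos θ). Then there exist absolute constants 0 < c ≤ C with c |sin(θ/2)| ≤ d(θ) ≤ C |sin(θ/2)| for θ ∈ [−π, π], and consequently the double-layer density symbol (d(θ)· (h/α(θ)))² k_h(θ), with k_h(θ) = (4/h) sin²(θ/2), satisfies c' h sin²(θ/2) ≤ (d(θ) h/α(θ))² k_h(θ) ≤ C' h sin²(θ/2); hence its max/min ratio over the resolved frequencies θ_j = 2πj/N, 1 ≤ j ≤ N/2, grows like N² ≍ h⁻². -/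
open Real Set

private lemma sinh_le_mul_exp {y : ℝ} (hy : 0 ≤ y) : Real.sinh y ≤ y * Real.exp (2 * y) := by
  have hE : 0 < Real.exp y := Real.exp_pos y
  have h3 : 1 ≤ Real.exp y := Real.one_le_exp hy
  have h2 : Real.exp (2 * y) = Real.exp y ^ 2 := by
    rw [two_mul, Real.exp_add, sq]
  have hneg : Real.exp (-y) = (Real.exp y)⁻¹ := Real.exp_neg y
  have h1 : (-(2 * y)) + 1 ≤ Real.exp (-(2 * y)) := Real.add_one_le_exp _
  have h4 : Real.exp (-(2 * y)) = ((Real.exp y) ^ 2)⁻¹ := by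
    rw [← h2, Real.exp_neg]
  rw [h4] at h1
  have h5 : Real.exp y ^ 2 - 1 ≤ 2 * y * Real.exp y ^ 2 := by
    have := mul_le_mul_of_nonneg_right h1 (le_of_lt (by positivity : (0:ℝ) < Real.exp y ^ 2))
    rw [inv_mul_cancel₀ (by positivity)] at this
    nlinarith
  rw [Real.sinh_eq, hneg, h2]
  rw [div_le_iff₀ (by norm_num : (0:ℝ) < 2)]
  have hEinv : (Real.exp y)⁻¹ = 1 / Real.exp y := by ring
  nlinarith [mul_le_mul_of_nonneg_right h5 hE.le, sq_nonneg (Real.exp y - 1),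
    mul_pos hE hE, inv_pos.mpr hE, mul_inv_cancel₀ (ne_of_gt hE)]

private lemma cosh_eq_half (x : ℝ) : Real.cosh x = 1 + 2 * Real.sinh (x / 2) ^ 2 := by
  have := Real.cosh_two_mul (x / 2)
  have h2 : 2 * (x / 2) = x := by ring
  rw [h2] at this
  rw [this, Real.cosh_sq]
  ring

private lemma exp_half_le_two : Real.exp (1/2) ≤ 2 := by
  nlinarith [Real.exp_one_lt_d9, Real.exp_pos (1/2 : ℝ),
    (by rw [← Real.exp_add]; norm_num : Real.exp (1/2) * Real.exp (1/2) = Real.exp 1)]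

private lemma exp_two_le_eight : Real.exp 2 ≤ 8 := by
  nlinarith [Real.exp_one_lt_d9, Real.exp_pos (1:ℝ),
    (by rw [← Real.exp_add]; norm_num : Real.exp 1 * Real.exp 1 = Real.exp 2)]

/-- Double-layer flat-symbol conditioning: the double-layer factor
`d(θ) = 1 − e^{−α(θ)}` with `cosh α(θ) = 2 − cos θ` is comparable to
`|sin(θ/2)|`, and consequently the double-layer density symbol
`(d(θ) h/α(θ))² k_h(θ)` with `k_h(θ) = (4/h) sin²(θ/2)` is comparable to
`h sin²(θ/2)`. -/
theorem double_layer_symbol_conditioning :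
    ∃ c C : ℝ, 0 < c ∧ c ≤ C ∧
      ∀ θ ∈ Icc (-π) π, ∀ α : ℝ, 0 ≤ α → Real.cosh α = 2 - Real.cos θ →
        (c * |Real.sin (θ / 2)| ≤ 1 - Real.exp (-α) ∧
          1 - Real.exp (-α) ≤ C * |Real.sin (θ / 2)|) ∧
        (θ ≠ 0 → ∀ h : ℝ, 0 < h →
          c * (h * Real.sin (θ / 2) ^ 2) ≤
              ((1 - Real.exp (-α)) * (h / α)) ^ 2 *
                ((4 / h) * Real.sin (θ / 2) ^ 2) ∧
            ((1 - Real.exp (-α)) * (h / α)) ^ 2 *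
                ((4 / h) * Real.sin (θ / 2) ^ 2) ≤
              C * (h * Real.sin (θ / 2) ^ 2)) := by
  refine ⟨1/16, 4, by norm_num, by norm_num, ?_⟩
  intro θ hθ α hα hcosh
  set s := |Real.sin (θ / 2)| with hsdef
  have hs0 : 0 ≤ s := abs_nonneg _
  have hs1 : s ≤ 1 := abs_le.mpr ⟨Real.neg_one_le_sin _, Real.sin_le_one _⟩
  have hsq : Real.sin (θ / 2) ^ 2 = s ^ 2 := (sq_abs _).symm
  have hcosh2 : Real.cosh α = 1 + 2 * s ^ 2 := by
    rw [hcosh]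
    have hc2 : Real.cos θ = 2 * Real.cos (θ / 2) ^ 2 - 1 := by
      have := Real.cos_two_mul (θ / 2)
      rwa [show 2 * (θ / 2) = θ by ring] at this
    rw [hc2, Real.cos_sq', ← hsq]
    ring
  by_cases hθ0 : θ = 0
  · subst hθ0
    have hs : s = 0 := by simp [hsdef]
    have hα0 : α = 0 := by
      by_contra hne
      have := Real.one_lt_cosh.mpr hne
      rw [hcosh2, hs] at this
      norm_num at this
    subst hα0
    rw [hs]
    simp
  · -- θ ≠ 0
    have hsne : Real.sin (θ / 2) ≠ 0 := by
      have hpi : 0 < π := Real.pi_pos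
      have h1 : -π < θ / 2 := by nlinarith [hθ.1]
      have h2 : θ / 2 < π := by nlinarith [hθ.2]
      rw [ne_eq, Real.sin_eq_zero_iff_of_lt_of_lt h1 h2]
      intro h; exact hθ0 (by linarith)
    have hspos : 0 < s := abs_pos.mpr hsne
    have hαpos : 0 < α := by
      rcases lt_or_eq_of_le hα with h | h
      · exact h
      · exfalso; rw [← h, Real.cosh_zero] at hcosh2; nlinarith
    -- upper bound α ≤ 2s
    have hα_le : α ≤ 2 * s := by
      have h1 : Real.cosh (2 * s) = 1 + 2 * Real.sinh s ^ 2 := by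
        have := cosh_eq_half (2 * s)
        rwa [show 2 * s / 2 = s by ring] at this
      have h2 : s ≤ Real.sinh s := Real.self_le_sinh_iff.mpr hs0
      have h3 : Real.cosh α ≤ Real.cosh (2 * s) := by
        rw [hcosh2, h1]; nlinarith
      have h4 := Real.cosh_le_cosh.mp h3
      rwa [abs_of_nonneg hα, abs_of_nonneg (by positivity : (0:ℝ) ≤ 2 * s)] at h4
    -- lower bound s/2 ≤ α
    have hα_ge : s / 2 ≤ α := by
      have h1 : Real.sinh (s / 4) ≤ s / 2 := by
        have h2 := sinh_le_mul_exp (by positivity : (0:ℝ) ≤ s / 4)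
        have h3 : Real.exp (2 * (s / 4)) ≤ 2 := by
          calc Real.exp (2 * (s / 4)) ≤ Real.exp (1/2) :=
                Real.exp_le_exp.mpr (by linarith)
            _ ≤ 2 := exp_half_le_two
        nlinarith
      have h4 : Real.cosh (s / 2) = 1 + 2 * Real.sinh (s / 4) ^ 2 := by
        have := cosh_eq_half (s / 2)
        rwa [show s / 2 / 2 = s / 4 by ring] at this
      have h5 : Real.cosh (s / 2) ≤ Real.cosh α := by
        rw [hcosh2, h4]
        nlinarith [Real.sinh_nonneg_iff.mpr (by positivity : (0:ℝ) ≤ s / 4)]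
      have h6 := Real.cosh_le_cosh.mp h5
      rwa [abs_of_nonneg hα, abs_of_nonneg (by positivity : (0:ℝ) ≤ s / 2)] at h6
    -- d bounds
    have hd_le : 1 - Real.exp (-α) ≤ α := by
      have := Real.add_one_le_exp (-α); linarith
    have hexpα : 1 / 8 ≤ Real.exp (-α) := by
      have h1 : Real.exp (-α) ≥ Real.exp (-2) := Real.exp_le_exp.mpr (by linarith)
      have h2 : Real.exp (-2) = 1 / Real.exp 2 := by
        rw [Real.exp_neg]; ring
      have h3 := exp_two_le_eight
      have h4 := Real.exp_pos (2:ℝ)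
      rw [h2] at h1
      have : (1:ℝ) / 8 ≤ 1 / Real.exp 2 := by
        apply div_le_div_of_nonneg_left (by norm_num) h4 h3
      linarith
    have hd_ge : α / 8 ≤ 1 - Real.exp (-α) := by
      have h1 : 1 + α ≤ Real.exp α := by
        have := Real.add_one_le_exp α; linarith
      have h2 : Real.exp (-α) * Real.exp α = 1 := by
        rw [← Real.exp_add]; simp
      have h3 := Real.exp_pos (-α)
      have h4 : Real.exp (-α) + α * Real.exp (-α) ≤ 1 := by nlinarith
      nlinarith
    have hdpos : 0 < 1 - Real.exp (-α) := by nlinarith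
    constructor
    · constructor
      · -- (1/16) s ≤ d
        nlinarith
      · -- d ≤ 4 s
        nlinarith
    · intro _ h hh
      set d := 1 - Real.exp (-α) with hddef
      have hkey : (d * (h / α)) ^ 2 * ((4 / h) * Real.sin (θ / 2) ^ 2)
          = (4 * d ^ 2 / α ^ 2) * (h * s ^ 2) := by
        rw [hsq]
        field_simp
      rw [hkey, hsq]
      have hlo : (1:ℝ) / 16 ≤ 4 * d ^ 2 / α ^ 2 := by
        rw [le_div_iff₀ (by positivity)]
        have h' := pow_le_pow_left₀ (by positivity : (0:ℝ) ≤ α / 8) hd_ge 2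
        have he : (1:ℝ)/16 * α ^ 2 = 4 * ((α/8) ^ 2) := by ring
        rw [he]
        linarith
      have hhi : 4 * d ^ 2 / α ^ 2 ≤ 4 := by
        rw [div_le_iff₀ (by positivity)]
        have h' := pow_le_pow_left₀ hdpos.le hd_le 2
        linarith
      have hpos : 0 ≤ h * s ^ 2 := by positivity
      constructor
      · exact mul_le_mul_of_nonneg_right hlo hpos
      · exact mul_le_mul_of_nonneg_right hhi hpos
end
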